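/- The group with presentation on four generators a₁, b₁, a₂, b₂ with relators b₁b₂, b₂a₂b₂⁻¹a₁, and all six pairwise commutators [a₁,b₁], [a₁,a₂], [a₁,b₂], [b₁,a₂], [b₁,b₂], [a₂,b₂] is isomorphic to ℤ × ℤ. -/
import Mathlib

/-!
The group presented on a₁, b₁, a₂, b₂ with relators b₁b₂, b₂a₂b₂⁻¹a₁ and all six
pairwise commutators is isomorphic to ℤ × ℤ.
Generators: a₁ = 0, b₁ = 1, a₂ = 2, b₂ = 3.
-/

namespace Stmt11

def a₁ : FreeGroup (Fin 4) := FreeGroup.of 0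
def b₁ : FreeGroup (Fin 4) := FreeGroup.of 1
def a₂ : FreeGroup (Fin 4) := FreeGroup.of 2
def b₂ : FreeGroup (Fin 4) := FreeGroup.of 3

def rels : Set (FreeGroup (Fin 4)) :=
  { b₁ * b₂,
    b₂ * a₂ * b₂⁻¹ * a₁,
    a₁ * b₁ * a₁⁻¹ * b₁⁻¹,
    a₁ * a₂ * a₁⁻¹ * a₂⁻¹,
    a₁ * b₂ * a₁⁻¹ * b₂⁻¹,
    b₁ * a₂ * b₁⁻¹ * a₂⁻¹,
    b₁ * b₂ * b₁⁻¹ * b₂⁻¹,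
    a₂ * b₂ * a₂⁻¹ * b₂⁻¹ }

abbrev G := PresentedGroup rels

lemma rel_one {r : FreeGroup (Fin 4)} (hr : r ∈ rels) : PresentedGroup.mk rels r = 1 :=
  (QuotientGroup.eq_one_iff _).mpr (Subgroup.subset_normalClosure hr)

noncomputable def v : Fin 4 → Multiplicative (ℤ × ℤ) :=
  ![Multiplicative.ofAdd (-1, 0), Multiplicative.ofAdd (0, -1),
    Multiplicative.ofAdd (1, 0), Multiplicative.ofAdd (0, 1)]

lemma hv : ∀ r ∈ rels, FreeGroup.lift v r = 1 := by
  intro r hr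
  rcases hr with h | h | h | h | h | h | h | h <;> subst h <;>
    simp [a₁, b₁, a₂, b₂, v, ← ofAdd_neg, ← ofAdd_add] <;> decide

noncomputable def f : G →* Multiplicative (ℤ × ℤ) := PresentedGroup.toGroup hv

def A : G := PresentedGroup.of 2
def B : G := PresentedGroup.of 3

lemma hAB : Commute A B := by
  have := rel_one (r := a₂ * b₂ * a₂⁻¹ * b₂⁻¹) (by simp [rels])
  simp only [map_mul, map_inv] at this
  have h : (PresentedGroup.mk rels (a₂) : G) = A := rfl
  have h' : (PresentedGroup.mk rels (b₂) : G) = B := rfl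
  rw [h, h'] at this
  exact commutatorElement_eq_one_iff_commute.mp this

lemma hB₁ : (PresentedGroup.of 1 : G) = B⁻¹ := by
  have := rel_one (r := b₁ * b₂) (by simp [rels])
  simp only [map_mul] at this
  have h : (PresentedGroup.mk rels b₁ : G) = PresentedGroup.of 1 := rfl
  have h' : (PresentedGroup.mk rels b₂ : G) = B := rfl
  rw [h, h'] at this
  exact mul_eq_one_iff_eq_inv.mp this

lemma hA₁ : (PresentedGroup.of 0 : G) = A⁻¹ := by
  have := rel_one (r := b₂ * a₂ * b₂⁻¹ * a₁) (by simp [rels])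
  simp only [map_mul, map_inv] at this
  have h : (PresentedGroup.mk rels a₂ : G) = A := rfl
  have h' : (PresentedGroup.mk rels b₂ : G) = B := rfl
  have h0 : (PresentedGroup.mk rels a₁ : G) = PresentedGroup.of 0 := rfl
  rw [h, h', h0] at this
  have hc : B * A * B⁻¹ = A := by
    have := hAB.eq
    calc B * A * B⁻¹ = A * B * B⁻¹ := by rw [this.symm]
    _ = A := by group
  rw [hc] at this
  have : PresentedGroup.of 0 = A⁻¹ := by
    have := mul_eq_one_iff_inv_eq.mp this
    exact this.symm
  exact this

noncomputable def g : Multiplicative (ℤ × ℤ) →* G where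
  toFun x := A ^ (x.toAdd.1) * B ^ (x.toAdd.2)
  map_one' := by simp
  map_mul' x y := by
    have : ∀ m n : ℤ, Commute (A ^ m) (B ^ n) := fun m n => (hAB.zpow_zpow m n)
    simp only [toAdd_mul, Prod.fst_add, Prod.snd_add, zpow_add]
    rw [mul_assoc, ← mul_assoc (A ^ y.toAdd.1), (this _ _).eq]
    simp [mul_assoc]

lemma fA : f A = Multiplicative.ofAdd (1, 0) := by
  simp [f, A, PresentedGroup.toGroup.of, v]

lemma fB : f B = Multiplicative.ofAdd (0, 1) := by
  simp [f, B, PresentedGroup.toGroup.of, v]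

theorem pi1_Z_phi :
    Nonempty (PresentedGroup rels ≃* Multiplicative (ℤ × ℤ)) := by
  refine ⟨{ toFun := f, invFun := g, left_inv := ?_, right_inv := ?_, map_mul' := map_mul f }⟩
  · have h : g.comp f = MonoidHom.id G := by
      apply PresentedGroup.ext
      intro x
      fin_cases x
      · show g (f (PresentedGroup.of 0)) = PresentedGroup.of 0
        rw [hA₁]
        have : f A⁻¹ = Multiplicative.ofAdd (-1, 0) := by
          rw [map_inv, fA]; rfl
        rw [this]
        show A ^ (-1 : ℤ) * B ^ (0 : ℤ) = A⁻¹
        group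
      · show g (f (PresentedGroup.of 1)) = PresentedGroup.of 1
        rw [hB₁]
        have : f B⁻¹ = Multiplicative.ofAdd (0, -1) := by
          rw [map_inv, fB]; rfl
        rw [this]
        show A ^ (0 : ℤ) * B ^ (-1 : ℤ) = B⁻¹
        group
      · show g (f A) = A
        rw [fA]
        show A ^ (1 : ℤ) * B ^ (0 : ℤ) = A
        group
      · show g (f B) = B
        rw [fB]
        show A ^ (0 : ℤ) * B ^ (1 : ℤ) = B
        group
    intro x
    exact DFunLike.congr_fun h x
  · intro x
    show f (A ^ (x.toAdd.1) * B ^ (x.toAdd.2)) = x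
    rw [map_mul, map_zpow, map_zpow, fA, fB, ← ofAdd_zsmul, ← ofAdd_zsmul, ← ofAdd_add]
    have : x.toAdd.1 • ((1:ℤ), (0:ℤ)) + x.toAdd.2 • ((0:ℤ), (1:ℤ)) = x.toAdd := by
      simp [Prod.ext_iff]
    rw [this, ofAdd_toAdd]

end Stmt11
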